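/- Consider six boundary tile types C, W, E, N, S and a set of interior tiles, with the following adjacency rules: nothing may appear to the left of W or to the right of E except as permitted below; the allowed horizontal pairs among boundary tiles are exactly (C,N), (C,S), (W,E), (N,C), (N,N), (S,C), (S,S); the allowed vertical pairs (bottom, top) among boundary tiles are exactly (C,W), (C,E), (W,C), (W,W), (E,C), (E,E), (S,N); interior tiles may not be adjacent to C in any direction, may appear to the right of E (vertical pairs with S below an interior tile and an interior tile below N are allowed as specified), and no interior tile may be horizontally adjacent to C, W (on the right of an interior tile), N, or S. Then for every n ≥ 3, any valid tiling of the n × n grid whose four corners are C must have W in every non-corner cell of the leftmost column, E in every non-corner cell of the rightmost column, N in every non-corner cell of the top row, S in every non-corner cell of the bottom row, and no boundary tiles anywhere in the interior. -/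
import Mathlib


/-- The five boundary tile types: corner, west, east, north, south. -/
inductive BTile | C | W | E | Nt | St
deriving DecidableEq

/-- Horizontal adjacency (left tile, right tile) for boundary tiles together
with an arbitrary type `I` of interior tiles, following Table 1 of the paper.
The parameters give the (unspecified, interior-tile-dependent) entries:
`hWx i`: `W` may be left of interior tile `i`; `hxE i`: interior tile `i` may
be left of `E`; `hxx i i'`: interior `i` may be left of interior `i'`. -/
def Hrel {I : Type*} (hWx : I → Prop) (hxE : I → Prop) (hxx : I → I → Prop) :
    BTile ⊕ I → BTile ⊕ I → Prop
  | .inl .C, .inl .Nt => True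
  | .inl .C, .inl .St => True
  | .inl .W, .inl .E => True
  | .inl .W, .inr i => hWx i
  | .inl .Nt, .inl .C => True
  | .inl .Nt, .inl .Nt => True
  | .inl .St, .inl .C => True
  | .inl .St, .inl .St => True
  | .inr i, .inl .E => hxE i
  | .inr i, .inr i' => hxx i i'
  | _, _ => False

/-- Vertical adjacency (bottom tile, top tile), following Table 1 of the paper.
`vSx i`: `S` may be below interior tile `i`; `vxN i`: interior tile `i` may be
below `N`; `vxx i i'`: interior `i` may be below interior `i'`. -/
def Vrel {I : Type*} (vSx : I → Prop) (vxN : I → Prop) (vxx : I → I → Prop) :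
    BTile ⊕ I → BTile ⊕ I → Prop
  | .inl .C, .inl .W => True
  | .inl .C, .inl .E => True
  | .inl .W, .inl .C => True
  | .inl .W, .inl .W => True
  | .inl .E, .inl .C => True
  | .inl .E, .inl .E => True
  | .inl .St, .inl .Nt => True
  | .inl .St, .inr i => vSx i
  | .inr i, .inl .Nt => vxN i
  | .inr i, .inr i' => vxx i i'
  | _, _ => False

/-- Any valid tiling of the `n × n` grid (`n ≥ 3`) whose four corners carry the
corner tile `C` is forced to have `W` on the left edge, `E` on the right edge,
`N` on the top edge, `S` on the bottom edge (away from the corners), and only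
interior tiles strictly inside the grid.  Cell `(i, j)` has horizontal
coordinate `i` and vertical coordinate `j`, with `(0,0)` the bottom-left
corner. -/
theorem boundary_frame_forced {I : Type*}
    (hWx : I → Prop) (hxE : I → Prop) (hxx : I → I → Prop)
    (vSx : I → Prop) (vxN : I → Prop) (vxx : I → I → Prop)
    (n : ℕ) (hn : 3 ≤ n) (f : ℕ → ℕ → BTile ⊕ I)
    (hH : ∀ i j : ℕ, i + 1 < n → j < n → Hrel hWx hxE hxx (f i j) (f (i + 1) j))
    (hV : ∀ i j : ℕ, i < n → j + 1 < n → Vrel vSx vxN vxx (f i j) (f i (j + 1)))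
    (hc₁ : f 0 0 = .inl .C) (hc₂ : f (n - 1) 0 = .inl .C)
    (hc₃ : f 0 (n - 1) = .inl .C) (hc₄ : f (n - 1) (n - 1) = .inl .C) :
    (∀ j : ℕ, 0 < j → j < n - 1 → f 0 j = .inl .W ∧ f (n - 1) j = .inl .E) ∧
    (∀ i : ℕ, 0 < i → i < n - 1 → f i 0 = .inl .St ∧ f i (n - 1) = .inl .Nt) ∧
    (∀ i j : ℕ, 0 < i → i < n - 1 → 0 < j → j < n - 1 → ∃ t : I, f i j = .inr t) := by
  -- No `N` tile in a cell that has a cell above it.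
  have noN : ∀ i j : ℕ, i < n → j + 1 < n → f i j = .inl .Nt → False := by
    intro i j hi hj hf
    have h := hV i j hi hj
    rw [hf] at h
    rcases hx : f i (j + 1) with b | t
    · rw [hx] at h; cases b <;> simp [Vrel] at h
    · rw [hx] at h; simp [Vrel] at h
  -- No `S` tile in a cell that has a cell below it.
  have noS : ∀ i j : ℕ, i < n → 0 < j → j < n → f i j = .inl .St → False := by
    intro i j hi hj hj' hf
    have h := hV i (j - 1) hi (by omega)
    rw [show j - 1 + 1 = j by omega, hf] at h
    rcases hx : f i (j - 1) with b | t
    · rw [hx] at h; cases b <;> simp [Vrel] at h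
    · rw [hx] at h; simp [Vrel] at h
  -- No `W` tile in a cell that has a cell to its left.
  have noW : ∀ i j : ℕ, 0 < i → i < n → j < n → f i j = .inl .W → False := by
    intro i j hi hi' hj hf
    have h := hH (i - 1) j (by omega) hj
    rw [show i - 1 + 1 = i by omega, hf] at h
    rcases hx : f (i - 1) j with b | t
    · rw [hx] at h; cases b <;> simp [Hrel] at h
    · rw [hx] at h; simp [Hrel] at h
  -- No `E` tile in a cell that has a cell to its right.
  have noE : ∀ i j : ℕ, i + 1 < n → j < n → f i j = .inl .E → False := by
    intro i j hi hj hf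
    have h := hH i j hi hj
    rw [hf] at h
    rcases hx : f (i + 1) j with b | t
    · rw [hx] at h; cases b <;> simp [Hrel] at h
    · rw [hx] at h; simp [Hrel] at h
  -- No `C` tile with a cell above, a cell to the left and a cell to the right.
  have noCmid : ∀ i j : ℕ, 0 < i → i < n - 1 → j + 1 < n → f i j = .inl .C → False := by
    intro i j hi hi' hj hf
    have h := hV i j (by omega) hj
    rw [hf] at h
    rcases hx : f i (j + 1) with b | t
    · rw [hx] at h
      cases b <;> simp [Vrel] at h
      · exact noW i (j + 1) hi (by omega) hj hx
      · exact noE i (j + 1) (by omega) hj hx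
    · rw [hx] at h; simp [Vrel] at h
  -- No `C` tile in the top row away from the corners.
  have noCtop : ∀ i : ℕ, 0 < i → i < n - 1 → f i (n - 1) = .inl .C → False := by
    intro i hi hi' hf
    have h := hV i (n - 2) (by omega) (by omega)
    rw [show n - 2 + 1 = n - 1 by omega, hf] at h
    rcases hx : f i (n - 2) with b | t
    · rw [hx] at h
      cases b <;> simp [Vrel] at h
      · exact noW i (n - 2) hi (by omega) (by omega) hx
      · exact noE i (n - 2) (by omega) (by omega) hx
    · rw [hx] at h; simp [Vrel] at h
  -- No `C` tile in the left column away from the corners.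
  have noCleft : ∀ j : ℕ, 0 < j → j < n - 1 → f 0 j = .inl .C → False := by
    intro j hj hj' hf
    have h := hH 0 j (by omega) (by omega)
    rw [hf] at h
    rcases hx : f 1 j with b | t
    · rw [hx] at h
      cases b <;> simp [Hrel] at h
      · exact noN 1 j (by omega) (by omega) hx
      · exact noS 1 j (by omega) hj (by omega) hx
    · rw [hx] at h; simp [Hrel] at h
  -- No `C` tile in the right column away from the corners.
  have noCright : ∀ j : ℕ, 0 < j → j < n - 1 → f (n - 1) j = .inl .C → False := by
    intro j hj hj' hf
    have h := hH (n - 2) j (by omega) (by omega)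
    rw [show n - 2 + 1 = n - 1 by omega, hf] at h
    rcases hx : f (n - 2) j with b | t
    · rw [hx] at h
      cases b <;> simp [Hrel] at h
      · exact noN (n - 2) j (by omega) (by omega) hx
      · exact noS (n - 2) j (by omega) hj (by omega) hx
    · rw [hx] at h; simp [Hrel] at h
  -- Left column is `W`.
  have left : ∀ j : ℕ, 0 < j → j < n - 1 → f 0 j = .inl .W := by
    intro j
    induction j with
    | zero => omega
    | succ k ih =>
      intro _ hk
      rcases Nat.eq_zero_or_pos k with hk0 | hk0
      · subst hk0
        have h := hV 0 0 (by omega) (by omega)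
        rw [hc₁] at h
        rcases hx : f 0 1 with b | t
        · rw [hx] at h
          cases b <;> simp [Vrel] at h
          · rfl
          · exact absurd hx (fun hx => noE 0 1 (by omega) (by omega) hx)
        · rw [hx] at h; simp [Vrel] at h
      · have h := hV 0 k (by omega) (by omega)
        rw [ih hk0 (by omega)] at h
        rcases hx : f 0 (k + 1) with b | t
        · rw [hx] at h
          cases b <;> simp [Vrel] at h
          · exact absurd hx (fun hx => noCleft (k + 1) (by omega) hk hx)
          · rfl
        · rw [hx] at h; simp [Vrel] at h
  -- Right column is `E`.
  have right : ∀ j : ℕ, 0 < j → j < n - 1 → f (n - 1) j = .inl .E := by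
    intro j
    induction j with
    | zero => omega
    | succ k ih =>
      intro _ hk
      rcases Nat.eq_zero_or_pos k with hk0 | hk0
      · subst hk0
        have h := hV (n - 1) 0 (by omega) (by omega)
        rw [hc₂] at h
        rcases hx : f (n - 1) 1 with b | t
        · rw [hx] at h
          cases b <;> simp [Vrel] at h
          · exact absurd hx (fun hx => noW (n - 1) 1 (by omega) (by omega) (by omega) hx)
          · rfl
        · rw [hx] at h; simp [Vrel] at h
      · have h := hV (n - 1) k (by omega) (by omega)
        rw [ih hk0 (by omega)] at h
        rcases hx : f (n - 1) (k + 1) with b | t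
        · rw [hx] at h
          cases b <;> simp [Vrel] at h
          · exact absurd hx (fun hx => noCright (k + 1) (by omega) hk hx)
          · rfl
        · rw [hx] at h; simp [Vrel] at h
  -- Bottom row is `S`.
  have bot : ∀ i : ℕ, 0 < i → i < n - 1 → f i 0 = .inl .St := by
    intro i
    induction i with
    | zero => omega
    | succ k ih =>
      intro _ hk
      rcases Nat.eq_zero_or_pos k with hk0 | hk0
      · subst hk0
        have h := hH 0 0 (by omega) (by omega)
        rw [hc₁] at h
        rcases hx : f 1 0 with b | t
        · rw [hx] at h
          cases b <;> simp [Hrel] at h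
          · exact absurd hx (fun hx => noN 1 0 (by omega) (by omega) hx)
          · rfl
        · rw [hx] at h; simp [Hrel] at h
      · have h := hH k 0 (by omega) (by omega)
        rw [ih hk0 (by omega)] at h
        rcases hx : f (k + 1) 0 with b | t
        · rw [hx] at h
          cases b <;> simp [Hrel] at h
          · exact absurd hx (fun hx => noCmid (k + 1) 0 (by omega) hk (by omega) hx)
          · rfl
        · rw [hx] at h; simp [Hrel] at h
  -- Top row is `N`.
  have top : ∀ i : ℕ, 0 < i → i < n - 1 → f i (n - 1) = .inl .Nt := by
    intro i
    induction i with
    | zero => omega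
    | succ k ih =>
      intro _ hk
      rcases Nat.eq_zero_or_pos k with hk0 | hk0
      · subst hk0
        have h := hH 0 (n - 1) (by omega) (by omega)
        rw [hc₃] at h
        rcases hx : f 1 (n - 1) with b | t
        · rw [hx] at h
          cases b <;> simp [Hrel] at h
          · rfl
          · exact absurd hx (fun hx => noS 1 (n - 1) (by omega) (by omega) (by omega) hx)
        · rw [hx] at h; simp [Hrel] at h
      · have h := hH k (n - 1) (by omega) (by omega)
        rw [ih hk0 (by omega)] at h
        rcases hx : f (k + 1) (n - 1) with b | t
        · rw [hx] at h
          cases b <;> simp [Hrel] at h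
          · exact absurd hx (fun hx => noCtop (k + 1) (by omega) hk hx)
          · rfl
        · rw [hx] at h; simp [Hrel] at h
  refine ⟨fun j hj hj' => ⟨left j hj hj', right j hj hj'⟩,
    fun i hi hi' => ⟨bot i hi hi', top i hi hi'⟩, ?_⟩
  intro i j hi hi' hj hj'
  rcases hx : f i j with b | t
  · exfalso
    cases b
    · exact noCmid i j hi hi' (by omega) hx
    · exact noW i j hi (by omega) (by omega) hx
    · exact noE i j (by omega) (by omega) hx
    · exact noN i j (by omega) (by omega) hx
    · exact noS i j (by omega) hj (by omega) hx
  · exact ⟨t, rfl⟩
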